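/- arXiv:1001.5437 — 4 statements merged into one kernel-verified Lean document; each statement's English description precedes it below -/
import Mathlib

section
/- Given 2d+2 distinct real numbers a_1 < a_2 < ... < a_{2d+2}, among the points p_{a_i} = (a_i, a_i^2, ..., a_i^{2d}) on the moment curve in R^{2d} there is, up to scalar, a unique affine dependency, and it can be written as a sum over even-index points equaling a sum over odd-index points with all coefficients positive, each side's coefficients summing to 1. -/
/-!
The Lagrange nodal weights `u i = ∏_{j ≠ i} (a i - a j)⁻¹` read off the coefficient of `X^(n-1)`
of any polynomial `q` of degree `< n = 2d+2` as `∑ i, u i * q (a i)`. Taking `q = X^k`, `k ≤ 2d`,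
shows that `u` is an affine dependency of the points `p_{a i}`; as `a` is increasing, `u`
alternates in sign, and normalising `|u|` gives the positive even/odd form. Conversely, pairing
a dependency `w` with the Lagrange basis polynomial `L_i`, which is a delta function on the nodes
and has top coefficient `u i`, gives `w i = (∑ j, w j * a j ^ (2d+1)) * u i`.
-/

open Finset Polynomial

/-- The point `p_t = (t, t², …, t^D)` on the moment curve in `ℝ^D`. -/
noncomputable def momentPt (D : ℕ) (t : ℝ) : EuclideanSpace ℝ (Fin D) :=
  WithLp.toLp 2 (fun i => t ^ (i.1 + 1))

/-- `X` intertwines `Y`: `x₀ < y₀ < x₁ < y₁ < ⋯ < x_d < y_d`. -/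
def Intw {n : ℕ} {α : Type*} [LT α] (X Y : Fin n → α) : Prop :=
  (∀ i, X i < Y i) ∧ ∀ i j : Fin n, i.1 + 1 = j.1 → Y i < X j

/-- A collection of tuples is non-intertwining if no pair intertwines (in either order). -/
def NonIntw {n : ℕ} {α : Type*} [LT α] (R : Set (Fin n → α)) : Prop :=
  ∀ X ∈ R, ∀ Y ∈ R, ¬ Intw X Y

/-- A separated `(d+1)`-tuple from `{1,…,m}`: increasing with consecutive gaps at least 2. -/
def SepTuple (d m : ℕ) (A : Fin (d+1) → ℕ) : Prop :=
  (∀ x, 1 ≤ A x ∧ A x ≤ m) ∧ ∀ i j : Fin (d+1), i.1 + 1 = j.1 → A i + 2 ≤ A j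

namespace Lagrange

variable {F ι : Type*} [Field F] {s : Finset ι} {v : ι → F}

theorem sum_mul_eval_eq_coeff_mul (w : ι → F)
    (hw : ∀ k, k + 1 < #s → ∑ j ∈ s, w j * v j ^ k = 0) {P : F[X]} (hP : P.natDegree < #s) :
    ∑ j ∈ s, w j * P.eval (v j) = P.coeff (#s - 1) * ∑ j ∈ s, w j * v j ^ (#s - 1) := by
  calc ∑ j ∈ s, w j * P.eval (v j)
      = ∑ k ∈ range #s, P.coeff k * ∑ j ∈ s, w j * v j ^ k := by
        simp_rw [eval_eq_sum_range' hP, mul_sum, sum_comm (s := s)]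
        exact sum_congr rfl fun _ _ => sum_congr rfl fun _ _ => by ring
    _ = P.coeff (#s - 1) * ∑ j ∈ s, w j * v j ^ (#s - 1) := by
        refine sum_eq_single _ (fun k hk hne => ?_) (fun h => ?_)
        · rw [hw k (by have := mem_range.1 hk; omega), mul_zero]
        · exact absurd (mem_range.2 (by omega)) h

variable [DecidableEq ι]

theorem coeff_eq_sum_nodalWeight_mul_eval (hvs : Set.InjOn v s) {P : F[X]} (hP : P.degree < #s) :
    P.coeff (#s - 1) = ∑ i ∈ s, nodalWeight s v i * P.eval (v i) := by
  rw [coeff_eq_sum hvs hP]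
  refine sum_congr rfl fun i _ => ?_
  rw [nodalWeight, prod_inv_distrib, div_eq_inv_mul]

theorem sum_nodalWeight_mul_pow_eq_zero (hvs : Set.InjOn v s) {k : ℕ} (hk : k + 1 < #s) :
    ∑ i ∈ s, nodalWeight s v i * v i ^ k = 0 := by
  have hdeg : (X ^ k : F[X]).degree < #s := by
    rw [degree_X_pow]; exact_mod_cast hk.trans' k.lt_succ_self
  simpa [coeff_X_pow, show #s - 1 ≠ k by omega] using
    (coeff_eq_sum_nodalWeight_mul_eval hvs hdeg).symm

theorem coeff_basis_eq_nodalWeight (hvs : Set.InjOn v s) {i : ι} (hi : i ∈ s) :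
    (Lagrange.basis s v i).coeff (#s - 1) = nodalWeight s v i := by
  rw [← natDegree_basis hvs hi, ← leadingCoeff, leadingCoeff_basis hvs hi, nodalWeight,
    prod_inv_distrib]

theorem eq_mul_nodalWeight_of_sum_mul_pow_eq_zero (hvs : Set.InjOn v s) (w : ι → F)
    (hw : ∀ k, k + 1 < #s → ∑ j ∈ s, w j * v j ^ k = 0) {i : ι} (hi : i ∈ s) :
    w i = (∑ j ∈ s, w j * v j ^ (#s - 1)) * nodalWeight s v i := by
  have hdeg : (Lagrange.basis s v i).natDegree < #s := by
    rw [natDegree_basis hvs hi]; have := card_pos.2 ⟨i, hi⟩; omega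
  have hdual : ∑ j ∈ s, w j * (Lagrange.basis s v i).eval (v j) = w i := by
    rw [sum_eq_single i (fun j hj hji => by rw [eval_basis_of_ne hji.symm hj, mul_zero])
      (fun h => absurd hi h), eval_basis_self hvs hi, mul_one]
  rw [← hdual, sum_mul_eval_eq_coeff_mul w hw hdeg, coeff_basis_eq_nodalWeight hvs hi, mul_comm]

theorem neg_one_pow_mul_nodalWeight_pos {K : Type*} [Field K] [LinearOrder K]
    [IsStrictOrderedRing K] {n : ℕ} {v : Fin n → K} (hv : StrictMono v) (i : Fin n) :
    0 < (-1) ^ (n - 1 - i) * nodalWeight univ v i := by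
  have hsign : (-1 : K) ^ (n - 1 - i) = ∏ j ∈ univ.erase i, if j < i then 1 else -1 := by
    have hIoi : (univ.erase i).filter (fun j => ¬ j < i) = Ioi i := by
      ext j; simp only [mem_filter, mem_erase, mem_univ, mem_Ioi, not_lt]; grind
    rw [prod_ite, prod_const_one, one_mul, prod_const, hIoi, Fin.card_Ioi]
  rw [hsign, nodalWeight, ← prod_mul_distrib]
  refine prod_pos fun j hj => ?_
  rcases lt_or_gt_of_ne (ne_of_mem_erase hj) with h | h
  · rw [if_pos h, one_mul]
    exact inv_pos.2 (sub_pos.2 (hv h))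
  · rw [if_neg (not_lt.2 h.le), neg_one_mul, ← inv_neg, neg_sub]
    exact inv_pos.2 (sub_pos.2 (hv h))

theorem ite_even_mul_nodalWeight_pos {K : Type*} [Field K] [LinearOrder K]
    [IsStrictOrderedRing K] {d : ℕ} {v : Fin (2*d+2) → K} (hv : StrictMono v) (i : Fin (2*d+2)) :
    0 < (if Even i.1 then -1 else 1) * nodalWeight univ v i := by
  have hparity : (-1 : K) ^ (2*d+2 - 1 - i.1) = if Even i.1 then -1 else 1 := by
    split_ifs with h
    · exact Odd.neg_one_pow (by obtain ⟨m, hm⟩ := h; exact ⟨d - m, by omega⟩)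
    · exact Even.neg_one_pow
        (by obtain ⟨m, hm⟩ := Nat.not_even_iff_odd.1 h; exact ⟨d - m, by omega⟩)
  simpa only [hparity] using neg_one_pow_mul_nodalWeight_pos hv i

end Lagrange

theorem sum_smul_momentPt_eq_zero_iff {ι : Type*} (s : Finset ι) (D : ℕ) (w a : ι → ℝ) :
    ∑ i ∈ s, w i • momentPt D (a i) = 0 ↔ ∀ k : Fin D, ∑ i ∈ s, w i * a i ^ (k.1 + 1) = 0 := by
  rw [← WithLp.ofLp_eq_zero, funext_iff]
  simp [momentPt]

theorem isAffineDependency_momentPt_iff {ι : Type*} (s : Finset ι) (D : ℕ) (w a : ι → ℝ) :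
    (∑ i ∈ s, w i = 0 ∧ ∑ i ∈ s, w i • momentPt D (a i) = 0) ↔
      ∀ k ≤ D, ∑ i ∈ s, w i * a i ^ k = 0 := by
  rw [sum_smul_momentPt_eq_zero_iff]
  refine ⟨fun ⟨h0, h⟩ k hk => ?_, fun h => ⟨by simpa using h 0 (Nat.zero_le _), fun k => h _ k.2⟩⟩
  cases k with
  | zero => simpa using h0
  | succ k => exact h ⟨k, hk⟩

theorem sum_ite_neg_eq_zero_iff {ι M : Type*} [AddCommGroup M] (s : Finset ι) (p : ι → Prop)
    [DecidablePred p] (f : ι → M) :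
    ∑ i ∈ s, (if p i then f i else -f i) = 0 ↔ ∑ i ∈ s with p i, f i = ∑ i ∈ s with ¬p i, f i := by
  rw [sum_ite, sum_neg_distrib, add_neg_eq_zero]

theorem exists_pos_sum_filter_eq_one_of_sum_eq_zero {ι : Type*} [Fintype ι] [Nonempty ι]
    (p : ι → Prop) [DecidablePred p] (u : ι → ℝ)
    (hu : ∀ i, 0 < (if p i then -1 else 1) * u i) (hsum : ∑ i, u i = 0) :
    ∃ c : ι → ℝ, ∃ r ≠ 0, (∀ i, 0 < c i) ∧ ∑ i with p i, c i = 1 ∧ ∑ i with ¬p i, c i = 1 ∧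
      ∀ i, (if p i then c i else -c i) = r * u i := by
  set τ : ι → ℝ := fun i => (if p i then -1 else 1) * u i
  set T := ∑ i, τ i
  have hT : 0 < T := sum_pos (fun i _ => hu i) univ_nonempty
  set c : ι → ℝ := fun i => 2 * τ i / T
  have hsigned : ∀ i, (if p i then c i else -c i) = -(2 / T) * u i := fun i => by
    by_cases h : p i <;> simp only [c, τ, h, if_true, if_false] <;> ring
  have htotal : ∑ i, c i = 2 := by
    rw [← sum_div, ← mul_sum, mul_div_assoc, div_self hT.ne', mul_one]
  have hbalance : ∑ i with p i, c i = ∑ i with ¬p i, c i := by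
    rw [← sum_ite_neg_eq_zero_iff, sum_congr rfl fun i _ => hsigned i, ← mul_sum, hsum, mul_zero]
  have hsplit := sum_filter_add_sum_filter_not univ p c
  exact ⟨c, -(2 / T), by simp [hT.ne'], fun i => div_pos (mul_pos two_pos (hu i)) hT,
    by linarith, by linarith, hsigned⟩

/-- Among `2d+2` points on the moment curve in `ℝ^{2d}` there is a unique (up to scalar)
affine dependency, expressible with positive coefficients, the even-indexed and odd-indexed
coefficients each summing to `1`. -/
theorem unique_affine_dependency_on_moment_curve (d : ℕ) (a : Fin (2*d+2) → ℝ)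
    (ha : StrictMono a) :
    ∃ c : Fin (2*d+2) → ℝ,
      (∀ i, 0 < c i) ∧
      (∑ i ∈ Finset.univ.filter (fun i : Fin (2*d+2) => Even i.1), c i) = 1 ∧
      (∑ i ∈ Finset.univ.filter (fun i : Fin (2*d+2) => ¬ Even i.1), c i) = 1 ∧
      (∑ i ∈ Finset.univ.filter (fun i : Fin (2*d+2) => Even i.1), c i • momentPt (2*d) (a i)) =
        (∑ i ∈ Finset.univ.filter (fun i : Fin (2*d+2) => ¬ Even i.1),
          c i • momentPt (2*d) (a i)) ∧
      (∀ w : Fin (2*d+2) → ℝ, (∑ i, w i) = 0 →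
        (∑ i, w i • momentPt (2*d) (a i)) = 0 →
        ∃ t : ℝ, ∀ i, w i = t * (if Even i.1 then c i else -(c i))) := by
  have hinj : Set.InjOn a (univ : Finset (Fin (2*d+2))) := ha.injective.injOn
  have hcard : #(univ : Finset (Fin (2*d+2))) = 2*d+2 := by simp
  set u := Lagrange.nodalWeight univ a with hu_def
  have hu : ∑ i, u i = 0 ∧ ∑ i, u i • momentPt (2*d) (a i) = 0 :=
    (isAffineDependency_momentPt_iff _ _ _ _).2 fun k hk =>
      Lagrange.sum_nodalWeight_mul_pow_eq_zero hinj (by omega)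
  obtain ⟨c, r, hr, hc_pos, hc_even, hc_odd, hc_signed⟩ :=
    exists_pos_sum_filter_eq_one_of_sum_eq_zero (fun i : Fin (2*d+2) => Even i.1) u
      (Lagrange.ite_even_mul_nodalWeight_pos ha) hu.1
  refine ⟨c, hc_pos, hc_even, hc_odd, ?_, fun w hw0 hw => ?_⟩
  · rw [← sum_ite_neg_eq_zero_iff]
    simp_rw [← neg_smul, ← ite_smul, hc_signed, mul_smul, ← smul_sum, hu.2, smul_zero]
  · have hmoments := (isAffineDependency_momentPt_iff _ _ _ _).1 ⟨hw0, hw⟩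
    refine ⟨r⁻¹ * ∑ j, w j * a j ^ (2*d+1), fun i => ?_⟩
    rw [Lagrange.eq_mul_nodalWeight_of_sum_mul_pow_eq_zero hinj w
      (fun k hk => hmoments k (by omega)) (mem_univ i), ← hu_def, hc_signed, hcard,
      show 2*d+2 - 1 = 2*d+1 by omega]
    field_simp
end

section
/- If A = (a_0, a_1, ..., a_{2d}) is a 2d-simplex of a triangulation of C(m,2d), then A contains all points immediately below the d-face e(A) = (a_0, a_2, ..., a_{2d}) consisting of its even-index vertices; moreover, for any other d-face E of A with E ≠ e(A), the points immediately below E lie outside A. -/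
open Finset

/-- The vertex of the cyclic polytope `C(m,2d)` with label `i+1`. -/
noncomputable def cycVert (d m : ℕ) (i : Fin m) : EuclideanSpace ℝ (Fin (2*d)) :=
  momentPt (2*d) (i.1 + 1)

/-- The convex hull of the vertices of `C(m,2d)` indexed by a finite set `B`. -/
noncomputable def cycHull (d m : ℕ) (B : Finset (Fin m)) : Set (EuclideanSpace ℝ (Fin (2*d))) :=
  convexHull ℝ (cycVert d m '' (B : Set (Fin m)))

/-- The cyclic polytope `C(m,2d)`. -/
noncomputable def cycPoly (d m : ℕ) : Set (EuclideanSpace ℝ (Fin (2*d))) :=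
  convexHull ℝ (Set.range (cycVert d m))

/-- A triangulation of `C(m,2d)`: a collection of `2d`-simplices on the vertices which
covers the polytope and in which any two simplices meet along a common face. -/
def IsTriang (d m : ℕ) (S : Finset (Finset (Fin m))) : Prop :=
  (∀ B ∈ S, B.card = 2*d+1) ∧
  (∀ B ∈ S, AffineIndependent ℝ (fun v : B => cycVert d m v)) ∧
  (⋃ B ∈ S, cycHull d m B) = cycPoly d m ∧
  ∀ B₁ ∈ S, ∀ B₂ ∈ S, cycHull d m B₁ ∩ cycHull d m B₂ = cycHull d m (B₁ ∩ B₂)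

/-- The upward unit direction (last coordinate) in `ℝ^{2d}`. -/
noncomputable def upDir (d : ℕ) : EuclideanSpace ℝ (Fin (2*d)) :=
  WithLp.toLp 2 (fun j => if j.1 = 2*d - 1 then 1 else 0)

/-!
Write the vertices of `A` as `p(t₀), …, p(t_{2d})` on the moment curve, `t₀ < ⋯ < t_{2d}`.
Coefficient extraction from Lagrange interpolation gives `∑ⱼ wⱼ tⱼᵏ = [k = 2d]` for `k ≤ 2d`,
where `wⱼ = ∏_{l ≠ j} (tⱼ - tₗ)⁻¹` are the nodal weights; hence `∑ⱼ wⱼ = 0` and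
`∑ⱼ wⱼ p(tⱼ)` is the upward unit vector, and `wⱼ` has the sign of `(-1)ʲ`. Moving down from a
relative-interior point of `e(A)` decreases the positive even barycentric coordinates and
increases the zero odd ones, so one stays in `A` for a while. If an even vertex `i` is missing
from `E`, the affine function `y ↦ q(0) + ∑ₖ q_{k+1} yₖ` attached to the monic polynomial
`q = ∏_{l ≠ i} (X - tₗ)` takes the value `q(t)` at `p(t)`: it vanishes on `E`, is nonnegative
on `A`, and increases upwards, so every point below `E` lies outside `A`.
-/

open Filter Topology Polynomial Lagrange RealInnerProductSpace

theorem sum_nodalWeight_mul_pow {F ι : Type*} [Field F] [DecidableEq ι] {s : Finset ι}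
    {v : ι → F} (hvs : Set.InjOn v s) {k : ℕ} (hk : k < #s) :
    ∑ i ∈ s, nodalWeight s v i * v i ^ k = if k = #s - 1 then 1 else 0 := by
  have h := coeff_eq_sum hvs (P := X ^ k) (by rw [degree_X_pow]; exact_mod_cast hk)
  simp only [coeff_X_pow, eval_pow, eval_X, eq_comm (a := #s - 1)] at h
  rw [h]
  refine sum_congr rfl fun i _ => ?_
  rw [nodalWeight, prod_inv_distrib, div_eq_inv_mul]

theorem sum_nodalWeight_eq_zero {F ι : Type*} [Field F] [DecidableEq ι] {s : Finset ι}
    {v : ι → F} (hvs : Set.InjOn v s) (hs : 1 < #s) : ∑ i ∈ s, nodalWeight s v i = 0 := by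
  simpa [show 0 ≠ #s - 1 by omega] using sum_nodalWeight_mul_pow hvs (k := 0) (by omega)

theorem neg_one_pow_mul_prod_erase_sub_pos {K : Type*} [Field K] [LinearOrder K]
    [IsStrictOrderedRing K] {n : ℕ} {t : Fin (n + 1) → K} (ht : StrictMono t) (j : Fin (n + 1)) :
    0 < (-1) ^ (n - j : ℕ) * ∏ l ∈ univ.erase j, (t j - t l) := by
  have hsplit : univ.erase j = Iio j ∪ Ioi j := by
    ext l
    simp [ne_comm (a := l)]
  rw [hsplit, prod_union (disjoint_left.2 fun l h₁ h₂ => lt_asymm (mem_Iio.1 h₁) (mem_Ioi.1 h₂))]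
  have hcard : n - (j : ℕ) = #(Ioi j) := by simp [Fin.card_Ioi]
  rw [hcard, ← prod_const, mul_left_comm, ← prod_mul_distrib]
  exact mul_pos (prod_pos fun l hl => sub_pos.2 (ht (mem_Iio.1 hl)))
    (prod_pos fun l hl => by linarith [ht (mem_Ioi.1 hl)])

theorem card_filter_univ_even_fin (d : ℕ) :
    #(univ.filter fun j : Fin (2 * d + 1) => Even (j : ℕ)) = d + 1 := by
  have h : (univ.filter fun j : Fin (2 * d + 1) => Even (j : ℕ)) =
      univ.image fun k : Fin (d + 1) => (⟨2 * k, by omega⟩ : Fin (2 * d + 1)) := by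
    ext j
    simp only [mem_filter, mem_univ, true_and, mem_image, Fin.ext_iff]
    constructor
    · rintro ⟨r, hr⟩
      exact ⟨⟨r, by omega⟩, by simp; omega⟩
    · rintro ⟨k, hk⟩
      exact ⟨k, by omega⟩
  rw [h, card_image_of_injective _ fun k k' hk => Fin.ext (by simpa using hk)]
  simp

section ConvexWeights

variable {ι V : Type*} [Fintype ι]

theorem mem_convexHull_image_iff_exists_weights {𝕜 : Type*} [Field 𝕜] [LinearOrder 𝕜]
    [IsStrictOrderedRing 𝕜] [AddCommGroup V] [Module 𝕜 V] {p : ι → V} {s : Finset ι} {x : V} :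
    x ∈ convexHull 𝕜 (p '' s) ↔ ∃ w : ι → 𝕜, (∀ i, 0 ≤ w i) ∧ (∀ i ∉ s, w i = 0) ∧
      ∑ i, w i = 1 ∧ ∑ i, w i • p i = x := by
  classical
  constructor
  · refine fun hx => convexHull_min (t := {y | ∃ w : ι → 𝕜, (∀ i, 0 ≤ w i) ∧
      (∀ i ∉ s, w i = 0) ∧ ∑ i, w i = 1 ∧ ∑ i, w i • p i = y}) ?_ ?_ hx
    · rintro _ ⟨i, hi, rfl⟩
      refine ⟨Pi.single i 1, fun j => ?_, fun j hj => ?_, by simp, by simp [Pi.single_apply]⟩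
      · by_cases h : j = i <;> simp [h]
      · simp [show j ≠ i by rintro rfl; exact hj hi]
    · rintro _ ⟨w, hw0, hws, hw1, rfl⟩ _ ⟨w', hw0', hws', hw1', rfl⟩ a b ha hb hab
      refine ⟨a • w + b • w', fun i => ?_, fun i hi => ?_, ?_, ?_⟩
      · simp only [Pi.add_apply, Pi.smul_apply, smul_eq_mul]
        have := hw0 i; have := hw0' i; positivity
      · simp [hws i hi, hws' i hi]
      · simp [Finset.sum_add_distrib, ← Finset.mul_sum, hw1, hw1', hab]
      · simp [add_smul, mul_smul, Finset.sum_add_distrib, ← Finset.smul_sum]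
  · rintro ⟨w, hw0, hws, hw1, rfl⟩
    have hsub : ∀ i ∈ univ, i ∉ s → w i = 0 := fun i _ => hws i
    rw [← sum_subset (subset_univ s) hsub] at hw1
    rw [← sum_subset (subset_univ s) fun i hi his => by simp [hsub i hi his]]
    exact (convex_convexHull 𝕜 _).sum_mem (fun i _ => hw0 i) hw1
      fun i hi => subset_convexHull 𝕜 _ ⟨i, hi, rfl⟩

theorem eventually_sub_smul_mem_convexHull [AddCommGroup V] [Module ℝ V] {p : ι → V}
    {μ w : ι → ℝ} (hμ0 : ∀ i, 0 ≤ μ i) (hμ1 : ∑ i, μ i = 1) (hw : ∑ i, w i = 0)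
    (hwμ : ∀ i, μ i = 0 → w i ≤ 0) :
    ∀ᶠ δ in 𝓝[>] (0 : ℝ), ∑ i, μ i • p i - δ • ∑ i, w i • p i ∈ convexHull ℝ (Set.range p) := by
  have hweights : ∀ᶠ δ in 𝓝[>] (0 : ℝ), ∀ i, 0 ≤ μ i - δ * w i := by
    refine eventually_all.mpr fun i => ?_
    rcases (hμ0 i).eq_or_lt with hμi | hμi
    · filter_upwards [self_mem_nhdsWithin] with δ (hδ : 0 < δ)
      nlinarith [hwμ i hμi.symm]
    · have hcont : Continuous fun δ : ℝ => μ i - δ * w i := by fun_prop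
      refine eventually_nhdsWithin_of_eventually_nhds ?_
      filter_upwards [hcont.continuousAt.eventually (lt_mem_nhds (by simpa using hμi))]
        with δ hδ using hδ.le
  filter_upwards [hweights] with δ hδ
  refine mem_convexHull_of_exists_fintype (fun i => μ i - δ * w i) p hδ ?_
    (fun i => Set.mem_range_self i) ?_
  · simp [Finset.sum_sub_distrib, ← Finset.mul_sum, hμ1, hw]
  · simp [sub_smul, mul_smul, Finset.sum_sub_distrib, ← Finset.smul_sum]

theorem sub_smul_notMem_convexHull_of_le [AddCommGroup V] [Module ℝ V] {s : Set V}
    (f : V →ₗ[ℝ] ℝ) {r δ : ℝ} {x u : V} (hs : ∀ y ∈ s, r ≤ f y) (hx : f x = r) (hu : 0 < f u)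
    (hδ : 0 < δ) : x - δ • u ∉ convexHull ℝ s := by
  intro hmem
  have hle : r ≤ f (x - δ • u) := convexHull_min hs (convex_halfSpace_ge f.isLinear r) hmem
  rw [map_sub, map_smul, hx, smul_eq_mul] at hle
  nlinarith

variable [NormedAddCommGroup V] [NormedSpace ℝ V]

theorem exists_mem_openSegment_of_mem_intrinsicInterior {s : Set V} {x c : V}
    (hx : x ∈ intrinsicInterior ℝ s) (hc : c ∈ affineSpan ℝ s) :
    ∃ z ∈ s, x ∈ openSegment ℝ z c := by
  obtain ⟨y, hy, rfl⟩ := mem_intrinsicInterior.mp hx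
  let γ : ℝ → affineSpan ℝ s := fun τ => ⟨AffineMap.lineMap c y τ, AffineMap.lineMap_mem τ hc y.2⟩
  have hγ1 : γ 1 = y := Subtype.ext (AffineMap.lineMap_apply_one c (y : V))
  have hy_nhds : interior ((↑) ⁻¹' s) ∈ 𝓝 (γ 1) := hγ1 ▸ isOpen_interior.mem_nhds hy
  have hnear : ∀ᶠ τ in 𝓝 (1 : ℝ), γ τ ∈ interior ((↑) ⁻¹' s) :=
    (AffineMap.lineMap_continuous.subtype_mk _).continuousAt.preimage_mem_nhds hy_nhds
  obtain ⟨τ, hτs, hτ1⟩ := ((hnear.filter_mono nhdsWithin_le_nhds).and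
    (self_mem_nhdsWithin : Set.Ioi (1 : ℝ) ∈ 𝓝[>] 1)).exists
  have hτ0 : (0 : ℝ) < τ := zero_lt_one.trans hτ1
  refine ⟨γ τ, interior_subset (s := ((↑) ⁻¹' s : Set (affineSpan ℝ s))) hτs, τ⁻¹, 1 - τ⁻¹,
    inv_pos.mpr hτ0, sub_pos.mpr (inv_lt_one_of_one_lt₀ hτ1), add_sub_cancel _ _, ?_⟩
  simp only [γ, AffineMap.lineMap_apply_module]
  match_scalars <;> field_simp; ring

theorem exists_pos_weights_of_mem_intrinsicInterior_convexHull {p : ι → V} {s : Finset ι}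
    {x : V} (hx : x ∈ intrinsicInterior ℝ (convexHull ℝ (p '' s))) :
    ∃ μ : ι → ℝ, (∀ i ∈ s, 0 < μ i) ∧ (∀ i ∉ s, μ i = 0) ∧
      ∑ i, μ i = 1 ∧ ∑ i, μ i • p i = x := by
  classical
  have hs : s.Nonempty := by
    simpa using (convexHull_nonempty_iff.mp ⟨x, intrinsicInterior_subset hx⟩)
  set β : ι → ℝ := fun i => if i ∈ s then (#s : ℝ)⁻¹ else 0
  have hβ1 : ∑ i, β i = 1 := by
    simp [β, sum_ite_mem, hs.card_pos.ne']
  have hc : ∑ i, β i • p i ∈ convexHull ℝ (p '' s) :=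
    mem_convexHull_image_iff_exists_weights.mpr ⟨β, fun i => by positivity,
      fun i hi => if_neg hi, hβ1, rfl⟩
  obtain ⟨z, hz, a, b, ha, hb, hab, rfl⟩ :=
    exists_mem_openSegment_of_mem_intrinsicInterior hx (subset_affineSpan ℝ _ hc)
  obtain ⟨ρ, hρ0, hρs, hρ1, rfl⟩ := mem_convexHull_image_iff_exists_weights.mp hz
  refine ⟨a • ρ + b • β, fun i hi => ?_, fun i hi => ?_, ?_, ?_⟩
  · have := hρ0 i
    simp only [Pi.add_apply, Pi.smul_apply, smul_eq_mul, β, if_pos hi]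
    positivity
  · simp [hρs i hi, β, hi]
  · simp [Finset.sum_add_distrib, ← Finset.mul_sum, hρ1, hβ1, hab]
  · simp [add_smul, mul_smul, Finset.sum_add_distrib, ← Finset.smul_sum]

end ConvexWeights

theorem inner_coeff_momentPt (D : ℕ) {q : ℝ[X]} (hq : q.natDegree ≤ D) (s : ℝ) :
    ⟪WithLp.toLp 2 (fun k : Fin D => q.coeff (k + 1)), momentPt D s⟫ = q.eval s - q.coeff 0 := by
  rw [eval_eq_sum_range' (Nat.lt_succ_of_le hq), sum_range_succ', ← Fin.sum_univ_eq_sum_range]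
  simp [momentPt, PiLp.inner_apply, mul_comm]

section MomentCurve

variable {d : ℕ} {t : Fin (2 * d + 1) → ℝ}

theorem inner_upDir (hd : 0 < d) (c : Fin (2 * d) → ℝ) :
    ⟪WithLp.toLp 2 c, upDir d⟫ = c ⟨2 * d - 1, by omega⟩ := by
  have hlast : ∀ k : Fin (2 * d), (k : ℕ) = 2 * d - 1 ↔ k = ⟨2 * d - 1, by omega⟩ :=
    fun k => by rw [Fin.ext_iff]
  simp [upDir, PiLp.inner_apply, hlast]

theorem nodalWeight_pos_of_even (ht : StrictMono t) {j : Fin (2 * d + 1)} (hj : Even (j : ℕ)) :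
    0 < nodalWeight univ t j := by
  have h := neg_one_pow_mul_prod_erase_sub_pos ht j
  rw [((Nat.even_sub j.is_le).2 (iff_of_true (even_two_mul d) hj)).neg_one_pow, one_mul] at h
  rwa [nodalWeight, prod_inv_distrib, inv_pos]

theorem nodalWeight_neg_of_odd (ht : StrictMono t) {j : Fin (2 * d + 1)} (hj : ¬Even (j : ℕ)) :
    nodalWeight univ t j < 0 := by
  have h := neg_one_pow_mul_prod_erase_sub_pos ht j
  have hodd : Odd (2 * d - j) := Nat.not_even_iff_odd.1 fun h' =>
    hj (((Nat.even_sub j.is_le).1 h').1 (even_two_mul d))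
  rw [hodd.neg_one_pow, neg_one_mul, neg_pos] at h
  rwa [nodalWeight, prod_inv_distrib, inv_lt_zero]

theorem sum_nodalWeight_smul_momentPt (ht : Function.Injective t) :
    ∑ j, nodalWeight univ t j • momentPt (2 * d) (t j) = upDir d := by
  ext i
  simp only [momentPt, upDir, WithLp.ofLp_sum, WithLp.ofLp_smul, Finset.sum_apply, Pi.smul_apply,
    smul_eq_mul]
  rw [sum_nodalWeight_mul_pow ht.injOn (by simp)]
  simp only [card_univ, Fintype.card_fin]
  exact if_congr (by omega) rfl rfl

theorem eventually_sub_smul_upDir_mem_convexHull_momentPt (hd : 0 < d) (ht : StrictMono t)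
    {x : EuclideanSpace ℝ (Fin (2 * d))}
    (hx : x ∈ intrinsicInterior ℝ (convexHull ℝ ((momentPt (2 * d) ∘ t) '' {j | Even (j : ℕ)}))) :
    ∀ᶠ δ in 𝓝[>] (0 : ℝ), x - δ • upDir d ∈ convexHull ℝ (Set.range (momentPt (2 * d) ∘ t)) := by
  rw [← coe_filter_univ] at hx
  obtain ⟨μ, hμ_even, hμ_odd, hμ1, rfl⟩ := exists_pos_weights_of_mem_intrinsicInterior_convexHull hx
  have hμ0 : ∀ j, 0 ≤ μ j := fun j => by
    by_cases hj : Even (j : ℕ)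
    · exact (hμ_even j (by simpa using hj)).le
    · exact (hμ_odd j (by simpa using hj)).ge
  have hwμ : ∀ j, μ j = 0 → nodalWeight univ t j ≤ 0 := fun j hj0 => by
    by_cases hj : Even (j : ℕ)
    · exact absurd hj0 (hμ_even j (by simpa using hj)).ne'
    · exact (nodalWeight_neg_of_odd ht hj).le
  have h := eventually_sub_smul_mem_convexHull (p := momentPt (2 * d) ∘ t) hμ0 hμ1
    (sum_nodalWeight_eq_zero ht.injective.injOn (by simp; omega)) hwμ
  simpa only [Function.comp_apply, sum_nodalWeight_smul_momentPt ht.injective] using h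

theorem sub_smul_upDir_notMem_convexHull_momentPt (hd : 0 < d) (ht : StrictMono t)
    {E : Set (Fin (2 * d + 1))} {i : Fin (2 * d + 1)} (hi : Even (i : ℕ)) (hiE : i ∉ E)
    {x : EuclideanSpace ℝ (Fin (2 * d))} (hx : x ∈ convexHull ℝ ((momentPt (2 * d) ∘ t) '' E))
    {δ : ℝ} (hδ : 0 < δ) :
    x - δ • upDir d ∉ convexHull ℝ (Set.range (momentPt (2 * d) ∘ t)) := by
  set q := nodal (univ.erase i) t
  have hq : q.natDegree = 2 * d := by simp [q, natDegree_nodal]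
  set f : EuclideanSpace ℝ (Fin (2 * d)) →ₗ[ℝ] ℝ :=
    (innerSL ℝ (WithLp.toLp 2 fun k : Fin (2 * d) => q.coeff (k + 1))).toLinearMap
  have hf : ∀ j, f (momentPt (2 * d) (t j)) = q.eval (t j) - q.coeff 0 :=
    fun j => inner_coeff_momentPt (2 * d) hq.le (t j)
  have hq_off : ∀ j ≠ i, q.eval (t j) = 0 :=
    fun j hj => eval_nodal_at_node (mem_erase.2 ⟨hj, mem_univ j⟩)
  have hq_at : 0 < q.eval (t i) := by
    rw [← inv_pos, ← nodalWeight_eq_eval_nodal_erase_inv]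
    exact nodalWeight_pos_of_even ht hi
  refine sub_smul_notMem_convexHull_of_le f (r := -q.coeff 0) ?_ ?_ ?_ hδ
  · rintro _ ⟨j, rfl⟩
    rw [Function.comp_apply, hf]
    rcases eq_or_ne j i with rfl | hj
    · linarith
    · rw [hq_off j hj]; simp
  · refine convexHull_min ?_ (convex_hyperplane f.isLinear _) hx
    rintro _ ⟨j, hj, rfl⟩
    rw [Set.mem_ofPred_eq, Function.comp_apply, hf, hq_off j (by rintro rfl; exact hiE hj)]
    simp
  · have hmonic : q.coeff (2 * d) = 1 :=
      hq ▸ (nodal_monic (s := univ.erase i) (v := t)).coeff_natDegree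
    simp only [f, ContinuousLinearMap.coe_coe, innerSL_apply_apply, inner_upDir hd]
    rw [show 2 * d - 1 + 1 = 2 * d by omega, hmonic]
    exact one_pos

end MomentCurve

theorem below_even_face_general (d m : ℕ) (hd : 0 < d)
    (a : Fin (2*d+1) → Fin m) (ha : StrictMono a) :
    (∀ x ∈ intrinsicInterior ℝ (convexHull ℝ (cycVert d m '' (a '' {j | Even j.1}))),
      ∃ ε > (0:ℝ), ∀ δ : ℝ, 0 < δ → δ < ε →
        x - δ • upDir d ∈ cycHull d m (Finset.image a Finset.univ)) ∧
    (∀ E : Finset (Fin (2*d+1)), E.card = d + 1 →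
      E ≠ Finset.univ.filter (fun j : Fin (2*d+1) => Even j.1) →
      ∀ x ∈ intrinsicInterior ℝ (convexHull ℝ (cycVert d m '' (a '' (E : Set (Fin (2*d+1)))))),
      ∃ ε > (0:ℝ), ∀ δ : ℝ, 0 < δ → δ < ε →
        x - δ • upDir d ∉ cycHull d m (Finset.image a Finset.univ)) := by
  set t : Fin (2 * d + 1) → ℝ := fun j => ((a j : ℕ) : ℝ) + 1
  have ht : StrictMono t := fun j j' h => by simpa [t] using ha h
  have hA : cycHull d m (image a univ) = convexHull ℝ (Set.range (momentPt (2 * d) ∘ t)) := by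
    rw [cycHull, coe_image, coe_univ, Set.image_univ, ← Set.range_comp]
    rfl
  simp only [Set.image_image, hA]
  refine ⟨fun x hx => ?_, fun E hE hE_even x hx => ?_⟩
  · obtain ⟨ε, hε, hbelow⟩ := mem_nhdsGT_iff_exists_Ioo_subset.1
      (eventually_sub_smul_upDir_mem_convexHull_momentPt hd ht hx)
    exact ⟨ε, hε, fun δ hδ hδε => hbelow ⟨hδ, hδε⟩⟩
  · obtain ⟨i, hi, hiE⟩ : ∃ i : Fin (2 * d + 1), Even (i : ℕ) ∧ i ∉ E := by
      by_contra! h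
      exact hE_even (eq_of_subset_of_card_le (fun j hj => h j (mem_filter.1 hj).2)
        (by rw [hE, card_filter_univ_even_fin])).symm
    exact ⟨1, one_pos, fun δ hδ _ => sub_smul_upDir_notMem_convexHull_momentPt hd ht hi hiE
      (intrinsicInterior_subset hx) hδ⟩

/-- If `A` is a `2d`-simplex of a triangulation of `C(m,2d)`, then `A` contains the points
immediately below its even-index `d`-face `e(A)`, while for any other `d`-face `E ≠ e(A)`
of `A`, the points immediately below `E` lie outside `A`. -/
theorem below_even_face (d m : ℕ) (hd : 0 < d) (hm : 2*d+1 ≤ m)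
    (S : Finset (Finset (Fin m))) (hS : IsTriang d m S)
    (a : Fin (2*d+1) → Fin m) (ha : StrictMono a)
    (haS : Finset.image a Finset.univ ∈ S) :
    (∀ x ∈ intrinsicInterior ℝ (convexHull ℝ (cycVert d m '' (a '' {j | Even j.1}))),
      ∃ ε > (0:ℝ), ∀ δ : ℝ, 0 < δ → δ < ε →
        x - δ • upDir d ∈ cycHull d m (Finset.image a Finset.univ)) ∧
    (∀ E : Finset (Fin (2*d+1)), E.card = d + 1 →
      E ≠ Finset.univ.filter (fun j : Fin (2*d+1) => Even j.1) →
      ∀ x ∈ intrinsicInterior ℝ (convexHull ℝ (cycVert d m '' (a '' (E : Set (Fin (2*d+1)))))),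
      ∃ ε > (0:ℝ), ∀ δ : ℝ, 0 < δ → δ < ε →
        x - δ • upDir d ∉ cycHull d m (Finset.image a Finset.univ)) :=
  below_even_face_general d m hd a ha
end

section
/- Let A = (a_0,...,a_d) and B = (b_0,...,b_d) be increasing (d+1)-tuples from {1,...,m} with A wr B, and let ℓ = (ℓ_0,...,ℓ_d) be an increasing (d+1)-tuple of non-integer reals. For X a subset of {0,...,d}, let m_X(A,B) be the sorted tuple taking entries a_x for x in X and b_x for x not in X. Then exactly one of the following holds: (1) the alternating sum over all subsets X of {0,...,d} of (-1)^{|X|} I_{m_X(A,B)}(ℓ) equals 0; or (2) d is odd and a_i < ℓ_i < b_i for all i. -/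
open Finset

/-- The increasing enumeration of a finite set with `k` elements (junk value otherwise). -/
noncomputable def sortT {α : Type*} [LinearOrder α] [Inhabited α] (k : ℕ) (F : Finset α) :
    Fin k → α :=
  if h : F.card = k then fun i => (F.orderIsoOfFin h i : α) else fun _ => default

/-- `m_X(A,B)`: the sorted tuple with entries `{a_x : x ∈ X} ∪ {b_x : x ∉ X}`. -/
noncomputable def mXt {α : Type*} [LinearOrder α] [Inhabited α] {d : ℕ}
    (A B : Fin (d+1) → α) (X : Finset (Fin (d+1))) : Fin (d+1) → α :=
  sortT (d+1) (X.image A ∪ Xᶜ.image B)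

/-- The cyclic shift `x ↦ b_{x-1}` with `b_{-1} := b_d`. -/
def shiftB {α : Type*} {d : ℕ} (B : Fin (d+1) → α) : Fin (d+1) → α :=
  fun x => if x.1 = 0 then B (Fin.last d)
    else B ⟨x.1 - 1, lt_of_le_of_lt (Nat.sub_le _ _) x.isLt⟩

/-- `n_X(A,B)`: the sorted tuple with entries `{a_x : x ∈ X} ∪ {b_{x-1} : x ∉ X}`,
where `b_{-1}` is interpreted as `b_d`. -/
noncomputable def nXt {α : Type*} [LinearOrder α] [Inhabited α] {d : ℕ}
    (A B : Fin (d+1) → α) (X : Finset (Fin (d+1))) : Fin (d+1) → α :=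
  sortT (d+1) (X.image A ∪ Xᶜ.image (shiftB B))

open Classical in
/-- `I_C(ℓ)`: the indicator that `C` and `ℓ` intertwine in some order. -/
noncomputable def IoneT {d : ℕ} (C : Fin (d+1) → ℕ) (ℓ : Fin (d+1) → ℝ) : ℤ :=
  if (Intw (fun x => (C x : ℝ)) ℓ ∨ Intw ℓ (fun x => (C x : ℝ))) then 1 else 0

/-!
Since `A wr B`, the sorted tuple `m_X(A,B)` is simply `i ↦ if i ∈ X then a_i else b_i`.
`C wr ℓ` says that every `c_j` lies in the gap of `ℓ` just below `ℓ_j`, and `ℓ wr C` that every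
`c_j` lies in the gap just above `ℓ_j`; so both indicators are products of coordinatewise
conditions, and the alternating sum over `X` factors as
`∏ⱼ ([b_j below] - [a_j below]) + ∏ⱼ ([b_j above] - [a_j above])`.
If `a_j < ℓ_j < b_j` for all `j` this equals `(-1)^(d+1) + 1`. Otherwise, at the first
(resp. last) `j` with `ℓ_j ∉ (a_j, b_j)`, the entries `a_j` and `b_j` lie in the same gap
below (resp. above) `ℓ_j`, so each product has a vanishing factor.
-/

section AlternatingSum

variable {ι R α : Type*} [Fintype ι] [DecidableEq ι] [CommRing R]

theorem sum_neg_one_pow_card_mul_prod_piecewise (f g : ι → R) :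
    ∑ X : Finset ι, (-1) ^ X.card * ∏ i, X.piecewise f g i = ∏ i, (g i - f i) := by
  rw [prod_sub, powerset_univ]
  refine sum_congr rfl fun X _ => ?_
  rw [prod_piecewise, univ_inter, mul_assoc, mul_comm (∏ i ∈ X, f i)]

open Classical in
theorem sum_neg_one_pow_card_mul_boole_forall_piecewise (P : ι → α → Prop) (a b : ι → α) :
    ∑ X : Finset ι, (-1 : R) ^ X.card * (if ∀ i, P i (X.piecewise a b i) then 1 else 0) =
      ∏ i, ((if P i (b i) then 1 else 0) - if P i (a i) then 1 else 0) := by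
  rw [← sum_neg_one_pow_card_mul_prod_piecewise]
  refine sum_congr rfl fun X _ => ?_
  rw [← Fintype.prod_boole]
  congr 1
  refine prod_congr rfl fun i _ => ?_
  by_cases hi : i ∈ X <;> simp [hi]

end AlternatingSum

section Intertwining

variable {n : ℕ} {α β : Type*}

theorem Intw.not_swap [Preorder α] [NeZero n] {X Y : Fin n → α} (h : Intw X Y) : ¬ Intw Y X :=
  fun h' => (h.1 0).asymm (h'.1 0)

theorem Intw.comp_strictMono [Preorder α] [Preorder β] {X Y : Fin n → α} (h : Intw X Y)
    {f : α → β} (hf : StrictMono f) : Intw (f ∘ X) (f ∘ Y) :=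
  ⟨fun i => hf (h.1 i), fun i j hij => hf (h.2 i j hij)⟩

theorem Intw.strictMono_piecewise [Preorder α] {A B : Fin (n + 1) → α} (h : Intw A B)
    (X : Finset (Fin (n + 1))) : StrictMono (X.piecewise A B) := by
  refine Fin.strictMono_iff_lt_succ.mpr fun i => ?_
  calc X.piecewise A B i.castSucc ≤ B i.castSucc :=
        X.piecewise_cases A B (· ≤ B i.castSucc) (h.1 _).le le_rfl
    _ < A i.succ := h.2 _ _ (by simp)
    _ ≤ X.piecewise A B i.succ := X.piecewise_cases A B (A i.succ ≤ ·) le_rfl (h.1 _).le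

variable [LT α]

/-- `c` lies in the gap `(L_{j-1}, L_j)`, where `L_{-1} = -∞`. -/
def InGapBelow (L : Fin n → α) (j : Fin n) (c : α) : Prop :=
  c < L j ∧ ∀ i : Fin n, i.1 + 1 = j.1 → L i < c

/-- `c` lies in the gap `(L_j, L_{j+1})`, where `L_{n} = +∞`. -/
def InGapAbove (L : Fin n → α) (j : Fin n) (c : α) : Prop :=
  L j < c ∧ ∀ k : Fin n, j.1 + 1 = k.1 → c < L k

theorem intw_iff_forall_inGapBelow {C L : Fin n → α} :
    Intw C L ↔ ∀ j, InGapBelow L j (C j) :=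
  ⟨fun h j => ⟨h.1 j, fun i hij => h.2 i j hij⟩,
    fun h => ⟨fun j => (h j).1, fun i j hij => (h j).2 i hij⟩⟩

theorem intw_iff_forall_inGapAbove {C L : Fin n → α} :
    Intw L C ↔ ∀ j, InGapAbove L j (C j) :=
  ⟨fun h j => ⟨h.1 j, fun k hjk => h.2 j k hjk⟩,
    fun h => ⟨fun j => (h j).1, fun j k hjk => (h j).2 k hjk⟩⟩

end Intertwining

theorem image_univ_piecewise {ι α : Type*} [Fintype ι] [DecidableEq ι] [DecidableEq α]
    (X : Finset ι) (A B : ι → α) :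
    univ.image (X.piecewise A B) = X.image A ∪ Xᶜ.image B := by
  ext c
  simp only [mem_image, mem_univ, true_and, mem_union, mem_compl]
  constructor
  · rintro ⟨x, rfl⟩
    by_cases hx : x ∈ X
    · exact .inl ⟨x, hx, (X.piecewise_eq_of_mem A B hx).symm⟩
    · exact .inr ⟨x, hx, (X.piecewise_eq_of_notMem A B hx).symm⟩
  · rintro (⟨x, hx, rfl⟩ | ⟨x, hx, rfl⟩)
    · exact ⟨x, X.piecewise_eq_of_mem A B hx⟩
    · exact ⟨x, X.piecewise_eq_of_notMem A B hx⟩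

section Sorting

variable {α : Type*} [LinearOrder α] [Inhabited α]

theorem sortT_image_univ {k : ℕ} {f : Fin k → α} (hf : StrictMono f) :
    sortT k (univ.image f) = f := by
  have hcard : (univ.image f).card = k := by
    rw [card_image_of_injective _ hf.injective, card_univ, Fintype.card_fin]
  funext i
  rw [sortT, dif_pos hcard, coe_orderIsoOfFin_apply,
    ← orderEmbOfFin_unique hcard (fun x => mem_image_of_mem f (mem_univ x)) hf]

theorem mXt_eq_piecewise {d : ℕ} {A B : Fin (d + 1) → α} (h : Intw A B)
    (X : Finset (Fin (d + 1))) : mXt A B X = X.piecewise A B := by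
  classical
  rw [mXt, ← image_univ_piecewise, sortT_image_univ (h.strictMono_piecewise X)]

end Sorting

open Classical in
theorem IoneT_eq_add {d : ℕ} (C : Fin (d + 1) → ℕ) (L : Fin (d + 1) → ℝ) :
    IoneT C L = (if Intw (fun x => (C x : ℝ)) L then 1 else 0) +
      if Intw L (fun x => (C x : ℝ)) then 1 else 0 := by
  rw [IoneT]
  by_cases h : Intw (fun x => (C x : ℝ)) L
  · simp [h, h.not_swap]
  · simp [h]

section Gaps

variable {n : ℕ} {α : Type*} [LinearOrder α] {a b L : Fin n → α}

theorem inGapBelow_of_between (hab : Intw a b) (h : ∀ j, a j < L j ∧ L j < b j) (j : Fin n) :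
    InGapBelow L j (a j) :=
  ⟨(h j).1, fun i hij => (h i).2.trans (hab.2 i j hij)⟩

theorem inGapAbove_of_between (hab : Intw a b) (h : ∀ j, a j < L j ∧ L j < b j) (j : Fin n) :
    InGapAbove L j (b j) :=
  ⟨(h j).2, fun k hjk => (hab.2 j k hjk).trans (h k).1⟩

theorem inGapBelow_iff_of_not_between (hab : Intw a b) {j : Fin n}
    (hj : L j < a j ∨ b j < L j) (hprev : ∀ i : Fin n, i.1 + 1 = j.1 → L i < b i) :
    InGapBelow L j (a j) ↔ InGapBelow L j (b j) := by
  rcases hj with hlt | hgt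
  · exact iff_of_false (fun h => hlt.asymm h.1) (fun h => (hlt.trans (hab.1 j)).asymm h.1)
  · have hleft : ∀ i : Fin n, i.1 + 1 = j.1 → L i < a j :=
      fun i hij => (hprev i hij).trans (hab.2 i j hij)
    exact iff_of_true ⟨(hab.1 j).trans hgt, hleft⟩
      ⟨hgt, fun i hij => (hleft i hij).trans (hab.1 j)⟩

theorem inGapAbove_iff_of_not_between (hab : Intw a b) {j : Fin n}
    (hj : L j < a j ∨ b j < L j) (hnext : ∀ k : Fin n, j.1 + 1 = k.1 → a k < L k) :
    InGapAbove L j (a j) ↔ InGapAbove L j (b j) := by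
  rcases hj with hlt | hgt
  · have hright : ∀ k : Fin n, j.1 + 1 = k.1 → b j < L k :=
      fun k hjk => (hab.2 j k hjk).trans (hnext k hjk)
    exact iff_of_true ⟨hlt, fun k hjk => (hab.1 j).trans (hright k hjk)⟩
      ⟨hlt.trans (hab.1 j), hright⟩
  · exact iff_of_false (fun h => ((hab.1 j).trans hgt).asymm h.1) (fun h => hgt.asymm h.1)

theorem lt_or_lt_of_not_between (hL : ∀ j, L j ≠ a j ∧ L j ≠ b j) {j : Fin n}
    (hj : ¬ (a j < L j ∧ L j < b j)) : L j < a j ∨ b j < L j := by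
  rcases (hL j).1.lt_or_gt with hlt | hgt
  · exact .inl hlt
  · exact .inr ((hL j).2.lt_or_gt.resolve_left fun h => hj ⟨hgt, h⟩)

theorem exists_inGapBelow_iff (hab : Intw a b) (hL : ∀ j, L j ≠ a j ∧ L j ≠ b j)
    (h : ¬ ∀ j, a j < L j ∧ L j < b j) :
    ∃ j, (InGapBelow L j (a j) ↔ InGapBelow L j (b j)) := by
  classical
  have hbad : (univ.filter fun j => ¬ (a j < L j ∧ L j < b j)).Nonempty := by
    simpa [filter_nonempty_iff] using h
  obtain ⟨j, hj, hmin⟩ := (univ.filter _).exists_min_image id hbad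
  refine ⟨j, inGapBelow_iff_of_not_between hab
    (lt_or_lt_of_not_between hL (mem_filter.mp hj).2) fun i hij => ?_⟩
  by_contra hi
  exact (hmin i (mem_filter.mpr ⟨mem_univ i, fun h => hi h.2⟩)).not_gt
    (show i < j from Fin.lt_def.mpr (by omega))

theorem exists_inGapAbove_iff (hab : Intw a b) (hL : ∀ j, L j ≠ a j ∧ L j ≠ b j)
    (h : ¬ ∀ j, a j < L j ∧ L j < b j) :
    ∃ j, (InGapAbove L j (a j) ↔ InGapAbove L j (b j)) := by
  classical
  have hbad : (univ.filter fun j => ¬ (a j < L j ∧ L j < b j)).Nonempty := by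
    simpa [filter_nonempty_iff] using h
  obtain ⟨j, hj, hmax⟩ := (univ.filter _).exists_max_image id hbad
  refine ⟨j, inGapAbove_iff_of_not_between hab
    (lt_or_lt_of_not_between hL (mem_filter.mp hj).2) fun k hjk => ?_⟩
  by_contra hk
  exact (hmax k (mem_filter.mpr ⟨mem_univ k, fun h => hk h.1⟩)).not_gt
    (show j < k from Fin.lt_def.mpr (by omega))

end Gaps

open Classical in
theorem sum_neg_one_pow_card_mul_IoneT_mXt {d : ℕ} {A B : Fin (d + 1) → ℕ} (hAB : Intw A B)
    (L : Fin (d + 1) → ℝ) :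
    ∑ X : Finset (Fin (d + 1)), (-1 : ℤ) ^ X.card * IoneT (mXt A B X) L =
      (∏ j, ((if InGapBelow L j (B j : ℝ) then 1 else 0) -
        if InGapBelow L j (A j : ℝ) then 1 else 0)) +
      ∏ j, ((if InGapAbove L j (B j : ℝ) then 1 else 0) -
        if InGapAbove L j (A j : ℝ) then 1 else 0) := by
  have hcast : ∀ X : Finset (Fin (d + 1)), (fun x => ((mXt A B X x : ℕ) : ℝ)) =
      X.piecewise (fun x => (A x : ℝ)) (fun x => (B x : ℝ)) := by
    intro X
    funext x
    rw [mXt_eq_piecewise hAB]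
    by_cases hx : x ∈ X <;> simp [hx]
  simp only [IoneT_eq_add, hcast, intw_iff_forall_inGapBelow (L := L),
    intw_iff_forall_inGapAbove (L := L), mul_add, sum_add_distrib]
  congr 1 <;> convert sum_neg_one_pow_card_mul_boole_forall_piecewise _ _ _

theorem alternating_sum_on_line_general (d : ℕ) (A B : Fin (d+1) → ℕ)
    (hAB : Intw A B)
    (L : Fin (d+1) → ℝ)
    (hLni : ∀ x, ∀ z : ℤ, L x ≠ (z : ℝ)) :
    Xor' (∑ X : Finset (Fin (d+1)), (-1 : ℤ)^X.card * IoneT (mXt A B X) L = 0)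
      (Odd d ∧ ∀ i, (A i : ℝ) < L i ∧ L i < (B i : ℝ)) := by
  classical
  have hABℝ : Intw (fun j => (A j : ℝ)) (fun j => (B j : ℝ)) :=
    hAB.comp_strictMono Nat.strictMono_cast
  have hLne : ∀ j, L j ≠ A j ∧ L j ≠ B j :=
    fun j => ⟨by exact_mod_cast hLni j (A j), by exact_mod_cast hLni j (B j)⟩
  rw [sum_neg_one_pow_card_mul_IoneT_mXt hAB]
  by_cases hbetween : ∀ j, (A j : ℝ) < L j ∧ L j < B j
  · have hbelow : ∀ j, ((if InGapBelow L j (B j : ℝ) then 1 else 0) -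
        if InGapBelow L j (A j : ℝ) then 1 else 0 : ℤ) = -1 := fun j => by
      rw [if_neg fun h => (hbetween j).2.asymm h.1, if_pos (inGapBelow_of_between hABℝ hbetween j),
        zero_sub]
    have habove : ∀ j, ((if InGapAbove L j (B j : ℝ) then 1 else 0) -
        if InGapAbove L j (A j : ℝ) then 1 else 0 : ℤ) = 1 := fun j => by
      rw [if_pos (inGapAbove_of_between hABℝ hbetween j), if_neg fun h => (hbetween j).1.asymm h.1,
        sub_zero]
    simp only [hbelow, habove, prod_const, card_univ, Fintype.card_fin, one_pow]
    rcases Nat.even_or_odd d with heven | hodd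
    · exact .inl ⟨by rw [heven.add_one.neg_one_pow]; norm_num,
        fun h => Nat.not_odd_iff_even.mpr heven h.1⟩
    · exact .inr ⟨⟨hodd, hbetween⟩, by rw [hodd.add_one.neg_one_pow]; norm_num⟩
  · obtain ⟨i, hi⟩ := exists_inGapBelow_iff hABℝ hLne hbetween
    obtain ⟨j, hj⟩ := exists_inGapAbove_iff hABℝ hLne hbetween
    refine .inl ⟨?_, fun h => hbetween h.2⟩
    rw [prod_eq_zero (mem_univ i) (sub_eq_zero_of_eq (if_congr hi.symm rfl rfl)),
      prod_eq_zero (mem_univ j) (sub_eq_zero_of_eq (if_congr hj.symm rfl rfl)), add_zero]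

/-- For intertwining tuples `A ⋏ B` from `{1,…,m}` and an increasing tuple `ℓ` of
non-integers, exactly one of the following holds: the alternating sum
`∑_{X ⊆ {0,…,d}} (-1)^{|X|} I_{m_X(A,B)}(ℓ)` vanishes, or `d` is odd and
`a_i < ℓ_i < b_i` for all `i`. -/
theorem alternating_sum_on_line (d m : ℕ) (A B : Fin (d+1) → ℕ)
    (hA : SepTuple d m A) (hB : SepTuple d m B) (hAB : Intw A B)
    (L : Fin (d+1) → ℝ) (hL : StrictMono L)
    (hLni : ∀ x, ∀ z : ℤ, L x ≠ (z : ℝ)) :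
    Xor' (∑ X : Finset (Fin (d+1)), (-1 : ℤ)^X.card * IoneT (mXt A B X) L = 0)
      (Odd d ∧ ∀ i, (A i : ℝ) < L i ∧ L i < (B i : ℝ)) :=
  alternating_sum_on_line_general d A B hAB L hLni
end

section
/- The internal (d+1)-tuples in {1,...,2d+3} can be arranged in a cycle of length 2d+3 such that each tuple intertwines (in some order) exactly the two tuples at maximal distance d+1 from it along the cycle, and the non-intertwining collections of the maximal size d+1 are precisely the sets of d+1 cyclically consecutive tuples. -/
open Finset

/-- An internal `(d+1)`-tuple from `{1,…,m}`: separated and also `i_d + 2 ≤ i_0 + m`. -/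
def InternalTuple (d m : ℕ) (A : Fin (d+1) → ℕ) : Prop :=
  SepTuple d m A ∧ A (Fin.last d) + 2 ≤ A 0 + m

/-!
The cyclic gaps of an internal tuple are at least `2` and sum to `2d+3`, so all of them are `2`
except one, which is `3`. Hence an internal tuple is `a + 2x + [b ≤ x]` with a single jump before
position `b`; equivalently it is a progression `s, s+2, …, s+2d` taken modulo `2d+3`. Two such
progressions intertwine exactly when their starts differ by `±1`, and listing them by `s = 2w+3`
puts those at distance `d+1` along the cycle. All of this is read off the parameters `(a, b)`.

A non-intertwining set of `d+1` positions is thus a set `S ⊆ ZMod (2d+3)` of size `d+1` avoiding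
`S + u` for `u = d+2`. Counting, exactly one point `y` lies outside `S ∪ (S + u)`, and walking from
`y` in steps of `u` forces `S = {y+u, y+3u, …, y+(2d+1)u}`; since `2u = 1`, these are consecutive.
-/

def jumpTuple (d a b : ℕ) : Fin (d + 1) → ℕ := fun x => a + 2 * x.1 + if b ≤ x.1 then 1 else 0

section JumpTuple

variable {d : ℕ}

lemma add_two_mul_le_of_gap {A : Fin (d + 1) → ℕ}
    (hgap : ∀ i j : Fin (d + 1), i.1 + 1 = j.1 → A i + 2 ≤ A j) (i : Fin (d + 1)) :
    ∀ j, i ≤ j → A i + 2 * (j.1 - i.1) ≤ A j := by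
  refine Fin.induction (fun h => by simp [Fin.le_zero_iff.mp h]) fun j ih hij => ?_
  rcases hij.eq_or_lt with rfl | hlt
  · simp
  · have h₁ := ih (Fin.le_castSucc_iff.mpr hlt)
    have h₂ := hgap j.castSucc j.succ rfl
    simp only [Fin.val_castSucc, Fin.val_succ] at h₁ h₂ ⊢
    omega

lemma InternalTuple.apply_mem_Icc {A : Fin (d + 1) → ℕ} (h : InternalTuple d (2 * d + 3) A)
    (x : Fin (d + 1)) : A x ∈ Set.Icc (A 0 + 2 * x.1) (A 0 + 2 * x.1 + 1) := by
  obtain ⟨⟨-, hgap⟩, hlast⟩ := h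
  have h₀ := add_two_mul_le_of_gap hgap 0 x (Fin.zero_le x)
  have h₁ := add_two_mul_le_of_gap hgap x (Fin.last d) (Fin.le_last x)
  dsimp only [Fin.val_zero, Fin.val_last] at h₀ h₁
  exact ⟨by omega, by omega⟩

lemma InternalTuple.exists_eq_jumpTuple {A : Fin (d + 1) → ℕ}
    (h : InternalTuple d (2 * d + 3) A) : ∃ a b, 1 ≤ b ∧ b ≤ d + 1 ∧ A = jumpTuple d a b := by
  have hex : ∃ b, ∀ x : Fin (d + 1), x.1 = b → A x = A 0 + 2 * b + 1 :=
    ⟨d + 1, fun x hx => absurd hx x.2.ne⟩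
  refine ⟨A 0, Nat.find hex, Nat.one_le_iff_ne_zero.mpr fun h0 => ?_,
    Nat.find_min' hex fun x hx => absurd hx x.2.ne, funext fun x => ?_⟩
  · have := (Nat.find_eq_zero hex).mp h0 0 rfl
    omega
  obtain ⟨hlow, hup⟩ := h.apply_mem_Icc x
  simp only [jumpTuple]
  split_ifs with hbx
  · have hb : Nat.find hex < d + 1 := lt_of_le_of_lt hbx x.2
    have hjump := Nat.find_spec hex ⟨_, hb⟩ rfl
    have := add_two_mul_le_of_gap h.1.2 ⟨_, hb⟩ x hbx
    simp only at this
    omega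
  · have := Nat.find_min hex (not_le.mp hbx)
    have : A x ≠ A 0 + 2 * x.1 + 1 := fun hx => this fun y hy => Fin.ext hy ▸ hx
    omega

lemma internalTuple_jumpTuple_iff {a b : ℕ} (hb : 1 ≤ b) :
    InternalTuple d (2 * d + 3) (jumpTuple d a b) ↔
      1 ≤ a ∧ a + (if b ≤ d then 1 else 0) ≤ 3 := by
  constructor
  · rintro ⟨⟨hbd, -⟩, -⟩
    have h₀ := (hbd 0).1
    have h₁ := (hbd (Fin.last d)).2
    rw [jumpTuple, Fin.val_zero] at h₀
    rw [jumpTuple, Fin.val_last] at h₁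
    split_ifs at h₀ h₁ ⊢ <;> omega
  · rintro ⟨ha, hlast⟩
    refine ⟨⟨fun x => ?_, fun i j hij => ?_⟩, ?_⟩
    · have := x.2
      simp only [jumpTuple]
      split_ifs at hlast ⊢ <;> omega
    · have := j.2
      simp only [jumpTuple]
      split_ifs <;> omega
    · rw [jumpTuple, jumpTuple, Fin.val_zero, Fin.val_last]
      split_ifs at hlast ⊢ <;> omega

lemma jumpTuple_inj {a a' b b' : ℕ} (hb : 1 ≤ b) (hbd : b ≤ d + 1) (hb' : 1 ≤ b')
    (hbd' : b' ≤ d + 1) : jumpTuple d a b = jumpTuple d a' b' ↔ a = a' ∧ b = b' := by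
  refine ⟨fun h => ?_, fun ⟨ha, hb⟩ => ha ▸ hb ▸ rfl⟩
  have h₀ := congrFun h 0
  rw [jumpTuple, jumpTuple, Fin.val_zero] at h₀
  have ha : a = a' := by split_ifs at h₀ <;> omega
  refine ⟨ha, by_contra fun hne => ?_⟩
  have h₁ := congrFun h ⟨min b b', by omega⟩
  simp only [jumpTuple] at h₁
  split_ifs at h₁ <;> omega

lemma intw_jumpTuple_iff {a a' b b' : ℕ} (ha : a' ≤ a + 2) (hb : 1 ≤ b) (hbd : b ≤ d + 1)
    (hb' : 1 ≤ b') (hbd' : b' ≤ d + 1) :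
    Intw (jumpTuple d a b) (jumpTuple d a' b') ↔
      (a' = a + 1 ∧ (b' = b ∨ b' + 1 = b)) ∨ (a' = a + 2 ∧ b = 1 ∧ d ≤ b') := by
  dsimp only [Intw, jumpTuple]
  constructor
  · rintro ⟨hlt, hgt⟩
    have hlt' : ∀ x (hx : x < d + 1), a + 2 * x + (if b ≤ x then 1 else 0) <
        a' + 2 * x + (if b' ≤ x then 1 else 0) := fun x hx => hlt ⟨x, hx⟩
    have hgt' : ∀ x (hx : x + 1 < d + 1), a' + 2 * x + (if b' ≤ x then 1 else 0) <
        a + 2 * (x + 1) + (if b ≤ x + 1 then 1 else 0) :=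
      fun x hx => hgt ⟨x, by omega⟩ ⟨x + 1, hx⟩ rfl
    have h₀ := hlt' 0 (by omega)
    rcases (by split_ifs at h₀ <;> omega : a' = a + 1 ∨ a' = a + 2) with ha | ha
    · have hb'b : b' ≤ b := by
        by_contra! hc
        have := hlt' b (by omega)
        split_ifs at this <;> omega
      have hbb' : b ≤ b' + 1 := by
        by_contra! hc
        have := hgt' b' (by omega)
        split_ifs at this <;> omega
      omega
    · have hb1 : b = 1 := by
        rcases Nat.eq_zero_or_pos d with rfl | hd
        · omega
        · have := hgt' 0 (by omega)
          split_ifs at this <;> omega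
      have hdb' : d ≤ b' := by
        by_contra! hc
        have := hgt' b' (by omega)
        split_ifs at this <;> omega
      exact Or.inr ⟨ha, hb1, hdb'⟩
  · intro h
    refine ⟨fun x => ?_, fun i j hij => ?_⟩
    · have := x.2
      split_ifs <;> omega
    · have := j.2
      split_ifs <;> omega

end JumpTuple

/- Position `w` of the cycle is the progression `2w+3, 2w+5, …, 2w+2d+3` reduced into
`{1, …, 2d+3}` and sorted. -/
def cycleStart (d w : ℕ) : ℕ := if w = 0 then 3 else if w ≤ d + 1 then 2 else 1

def cycleJump (d w : ℕ) : ℕ := if w = 0 then d + 1 else if w ≤ d + 1 then w else w - (d + 1)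

def cycleTuple (d w : ℕ) : Fin (d + 1) → ℕ := jumpTuple d (cycleStart d w) (cycleJump d w)

section CycleTuple

variable {d : ℕ}

lemma one_le_cycleJump (w : ℕ) : 1 ≤ cycleJump d w := by
  unfold cycleJump
  split_ifs <;> omega

lemma cycleJump_le (w : ℕ) (hw : w < 2 * d + 3) : cycleJump d w ≤ d + 1 := by
  unfold cycleJump
  split_ifs <;> omega

lemma internalTuple_cycleTuple (w : ℕ) : InternalTuple d (2 * d + 3) (cycleTuple d w) := by
  rw [cycleTuple, internalTuple_jumpTuple_iff (one_le_cycleJump w)]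
  unfold cycleStart cycleJump
  split_ifs <;> omega

lemma cycleTuple_inj {w w' : ℕ} (hw : w < 2 * d + 3) (hw' : w' < 2 * d + 3) :
    cycleTuple d w = cycleTuple d w' ↔ w = w' := by
  refine ⟨fun h => ?_, congrArg _⟩
  rw [cycleTuple, cycleTuple, jumpTuple_inj (one_le_cycleJump w) (cycleJump_le w hw)
    (one_le_cycleJump w') (cycleJump_le w' hw')] at h
  unfold cycleStart cycleJump at h
  split_ifs at h <;> omega

lemma exists_cycleTuple_eq {A : Fin (d + 1) → ℕ} (hA : InternalTuple d (2 * d + 3) A) :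
    ∃ w < 2 * d + 3, cycleTuple d w = A := by
  obtain ⟨a, b, hb, hbd, rfl⟩ := hA.exists_eq_jumpTuple
  have hstart := (internalTuple_jumpTuple_iff hb).mp hA
  refine ⟨if a = 3 then 0 else if a = 2 then b else b + d + 1, ?_, ?_⟩
  · split_ifs <;> omega
  rw [cycleTuple, jumpTuple_inj (one_le_cycleJump _) (cycleJump_le _ (by split_ifs <;> omega))
    hb hbd]
  unfold cycleStart cycleJump
  split_ifs at hstart ⊢ <;> first | contradiction | omega

lemma intw_cycleTuple_iff {w w' : ℕ} (hw : w < 2 * d + 3) (hw' : w' < 2 * d + 3) :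
    (Intw (cycleTuple d w) (cycleTuple d w') ∨ Intw (cycleTuple d w') (cycleTuple d w)) ↔
      (w' = w + (d + 1) ∨ w' + (d + 2) = w) ∨ (w = w' + (d + 1) ∨ w + (d + 2) = w') := by
  have hstart : ∀ v, 1 ≤ cycleStart d v ∧ cycleStart d v ≤ 3 := fun v => by
    unfold cycleStart
    split_ifs <;> omega
  rw [cycleTuple, cycleTuple,
    intw_jumpTuple_iff (by grind) (one_le_cycleJump w) (cycleJump_le w hw)
      (one_le_cycleJump w') (cycleJump_le w' hw'),
    intw_jumpTuple_iff (by grind) (one_le_cycleJump w') (cycleJump_le w' hw')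
      (one_le_cycleJump w) (cycleJump_le w hw)]
  unfold cycleStart cycleJump
  split_ifs <;> omega

end CycleTuple

namespace ZMod

variable {m : ℕ}

lemma natCast_eq_natCast_iff_of_lt {a b : ℕ} (ha : a < m) (hb : b < m) :
    (a : ZMod m) = b ↔ a = b := by
  rw [natCast_eq_natCast_iff', Nat.mod_eq_of_lt ha, Nat.mod_eq_of_lt hb]

lemma eq_add_natCast_iff [NeZero m] {c e : ℕ} (hce : c + e = m) (i j : ZMod m) :
    j = i + c ↔ j.val = i.val + c ∨ j.val + e = i.val := by
  have hi := i.val_lt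
  have hj := j.val_lt
  rw [← val_injective m |>.eq_iff, val_add, val_natCast, Nat.add_mod_mod]
  rcases lt_or_ge (i.val + c) m with h | h
  · rw [Nat.mod_eq_of_lt h]
    omega
  · rw [Nat.mod_eq_sub_mod h, Nat.mod_eq_of_lt (by omega)]
    omega

lemma exists_forall_ne_iff_mem_or_sub_mem [NeZero m] {u : ZMod m} {S : Finset (ZMod m)}
    (hS : ∀ s ∈ S, s + u ∉ S) (hcard : 2 * #S + 1 = m) :
    ∃ y, ∀ z, z ≠ y ↔ z ∈ S ∨ z - u ∈ S := by
  have hdisj : Disjoint S (S.image (· + u)) := by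
    simp only [disjoint_right, mem_image]
    rintro _ ⟨s, hs, rfl⟩
    exact hS s hs
  have hU : #(S ∪ S.image (· + u))ᶜ = 1 := by
    rw [card_compl, card_union_of_disjoint hdisj, card_image_of_injective _ (add_left_injective u),
      ZMod.card]
    omega
  obtain ⟨y, hy⟩ := card_eq_one.mp hU
  refine ⟨y, fun z => ?_⟩
  rw [← not_iff_not, not_not, ← mem_singleton, ← hy]
  simp [sub_eq_add_neg]

lemma exists_eq_image_of_add_notMem [NeZero m] {u : ZMod m} (hu : IsUnit u)
    {S : Finset (ZMod m)} (hS : ∀ s ∈ S, s + u ∉ S) (hcard : 2 * #S + 1 = m) :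
    ∃ y, S = (range #S).image fun k : ℕ => y + k * (2 * u) := by
  obtain ⟨y, hy⟩ := exists_forall_ne_iff_mem_or_sub_mem hS hcard
  have hcast : ∀ {a b : ℕ}, a < m → b < m → ((a : ZMod m) * u = b * u ↔ a = b) :=
    fun ha hb => hu.mul_left_inj.trans (natCast_eq_natCast_iff_of_lt ha hb)
  have hodd : ∀ k < #S, y + (2 * k : ℕ) * u ∉ S → y + (2 * k + 1 : ℕ) * u ∈ S := by
    intro k hk hk'
    have hne : y + (2 * k + 1 : ℕ) * u ≠ y := by
      rw [Ne, add_eq_left, ← zero_mul u, ← Nat.cast_zero, hcast (by omega) (by omega)]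
      omega
    refine ((hy _).mp hne).resolve_right ?_
    rwa [Nat.cast_succ, add_one_mul, ← add_assoc, add_sub_cancel_right]
  have heven : ∀ k < #S, y + (2 * k : ℕ) * u ∉ S := by
    intro k
    induction k with
    | zero =>
      intro _
      simpa using fun h => (hy y).mpr (Or.inl h) rfl
    | succ k ih =>
      intro hk
      convert hS _ (hodd k (by omega) (ih (by omega))) using 2
      push_cast
      ring
  refine ⟨y + u, (eq_of_subset_of_card_le (fun z hz => ?_) ?_).symm⟩
  · obtain ⟨k, hk, rfl⟩ := mem_image.mp hz
    convert hodd k (mem_range.mp hk) (heven k (mem_range.mp hk)) using 1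
    push_cast
    ring
  · rw [card_image_of_injOn, card_range]
    intro a ha b hb hab
    have : ((2 * a : ℕ) : ZMod m) * u = (2 * b : ℕ) * u := by
      push_cast
      linear_combination hab
    have := (hcast (by simp at ha; omega) (by simp at hb; omega)).mp this
    omega

end ZMod

def internalCycle (d : ℕ) (i : ZMod (2 * d + 3)) : Fin (d + 1) → ℕ := cycleTuple d i.val

section InternalCycle

variable {d : ℕ}

lemma internalCycle_injective : Function.Injective (internalCycle d) := fun i j h =>
  ZMod.val_injective _ ((cycleTuple_inj i.val_lt j.val_lt).mp h)

lemma range_internalCycle :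
    Set.range (internalCycle d) = {A | InternalTuple d (2 * d + 3) A} := by
  ext A
  refine ⟨?_, fun hA => ?_⟩
  · rintro ⟨i, rfl⟩
    exact internalTuple_cycleTuple _
  · obtain ⟨w, hw, rfl⟩ := exists_cycleTuple_eq hA
    exact ⟨w, by rw [internalCycle, ZMod.val_natCast_of_lt hw]⟩

lemma intw_internalCycle_iff (i j : ZMod (2 * d + 3)) :
    (Intw (internalCycle d i) (internalCycle d j) ∨
        Intw (internalCycle d j) (internalCycle d i)) ↔
      (j = i + (d + 1 : ℕ) ∨ i = j + (d + 1 : ℕ)) := by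
  rw [ZMod.eq_add_natCast_iff (e := d + 2) (by omega),
    ZMod.eq_add_natCast_iff (e := d + 2) (by omega)]
  exact intw_cycleTuple_iff i.val_lt j.val_lt

end InternalCycle

lemma nonIntw_ncard_eq_iff_of_cycle {n d : ℕ} {α : Type*} [LT α]
    {f : ZMod (2 * d + 3) → Fin n → α} (hf : Function.Injective f)
    (hintw : ∀ i j, (Intw (f i) (f j) ∨ Intw (f j) (f i)) ↔
      (j = i + (d + 1 : ℕ) ∨ i = j + (d + 1 : ℕ)))
    (Y : Set (Fin n → α)) :
    (Y ⊆ Set.range f ∧ NonIntw Y ∧ Y.ncard = d + 1) ↔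
      ∃ i, Y = Set.range fun t : Fin (d + 1) => f (i + (t.1 : ℕ)) := by
  constructor
  · rintro ⟨hYf, hYnon, hYcard⟩
    classical
    set T := univ.filter fun i => f i ∈ Y
    have hYT : Y = f '' T := by
      ext A
      refine ⟨fun hA => ?_, ?_⟩
      · obtain ⟨i, rfl⟩ := hYf hA
        exact ⟨i, by simpa [T] using hA, rfl⟩
      · rintro ⟨i, hi, rfl⟩
        simpa [T] using hi
    have hT : #T = d + 1 := by
      rwa [hYT, Set.ncard_image_of_injective _ hf, Set.ncard_coe_finset] at hYcard
    have hzero : ((2 * d + 3 : ℕ) : ZMod (2 * d + 3)) = 0 := ZMod.natCast_self _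
    push_cast at hzero
    have hTu : ∀ s ∈ T, s + (d + 2 : ℕ) ∉ T := by
      intro s hs hs'
      simp only [T, mem_filter, mem_univ, true_and] at hs hs'
      have hdist : s = s + (d + 2 : ℕ) + (d + 1 : ℕ) := by
        push_cast
        linear_combination -hzero
      rcases (hintw _ _).mpr (Or.inr hdist) with h | h
      exacts [hYnon _ hs _ hs' h, hYnon _ hs' _ hs h]
    have hunit : 2 * ((d + 2 : ℕ) : ZMod (2 * d + 3)) = 1 := by
      push_cast
      linear_combination hzero
    obtain ⟨y, hy⟩ := ZMod.exists_eq_image_of_add_notMem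
      (.of_mul_eq_one_right 2 hunit) hTu (by omega)
    refine ⟨y, ?_⟩
    rw [hYT, hy, hT, hunit]
    ext A
    simp [Fin.exists_iff]
  · rintro ⟨i, rfl⟩
    have hshift : ∀ s t : Fin (d + 1), i + (s.1 : ℕ) ≠ i + (t.1 : ℕ) + (d + 1 : ℕ) := by
      intro s t h
      rw [add_assoc, add_right_inj, ← Nat.cast_add,
        ZMod.natCast_eq_natCast_iff_of_lt (by omega) (by omega)] at h
      omega
    refine ⟨Set.range_subset_iff.mpr fun t => ⟨_, rfl⟩, ?_, ?_⟩
    · rintro _ ⟨s, rfl⟩ _ ⟨t, rfl⟩ hst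
      rcases (hintw _ _).mp (Or.inl hst) with h | h
      exacts [hshift t s h, hshift s t h]
    · rw [Set.ncard_range_of_injective, Nat.card_eq_fintype_card, Fintype.card_fin]
      intro s t h
      exact Fin.ext <| (ZMod.natCast_eq_natCast_iff_of_lt (by omega) (by omega)).mp <|
        add_left_cancel (hf h)

theorem internal_tuples_cycle_general (d : ℕ) :
    ∃ f : ZMod (2*d+3) → (Fin (d+1) → ℕ),
      Function.Injective f ∧
      Set.range f = {A | InternalTuple d (2*d+3) A} ∧
      (∀ i j : ZMod (2*d+3),
        (Intw (f i) (f j) ∨ Intw (f j) (f i)) ↔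
          (j = i + (d+1 : ℕ) ∨ i = j + (d+1 : ℕ))) ∧
      (∀ Y : Set (Fin (d+1) → ℕ),
        ((∀ A ∈ Y, InternalTuple d (2*d+3) A) ∧ NonIntw Y ∧ Y.ncard = d + 1) ↔
          ∃ i : ZMod (2*d+3), Y = Set.range (fun t : Fin (d+1) => f (i + (t.1 : ℕ)))) := by
  refine ⟨internalCycle d, internalCycle_injective, range_internalCycle, intw_internalCycle_iff,
    fun Y => ?_⟩
  rw [← nonIntw_ncard_eq_iff_of_cycle internalCycle_injective intw_internalCycle_iff Y,
    range_internalCycle, Set.subset_ofPred]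

/-- The internal `(d+1)`-tuples in `{1,…,2d+3}` form a cycle of length `2d+3` in which each
tuple intertwines exactly the two tuples at maximal distance `d+1`, and the maximal
(size `d+1`) non-intertwining collections are exactly the sets of `d+1` consecutive tuples. -/
theorem internal_tuples_cycle (d : ℕ) (hd : 0 < d) :
    ∃ f : ZMod (2*d+3) → (Fin (d+1) → ℕ),
      Function.Injective f ∧
      Set.range f = {A | InternalTuple d (2*d+3) A} ∧
      (∀ i j : ZMod (2*d+3),
        (Intw (f i) (f j) ∨ Intw (f j) (f i)) ↔
          (j = i + (d+1 : ℕ) ∨ i = j + (d+1 : ℕ))) ∧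
      (∀ Y : Set (Fin (d+1) → ℕ),
        ((∀ A ∈ Y, InternalTuple d (2*d+3) A) ∧ NonIntw Y ∧ Y.ncard = d + 1) ↔
          ∃ i : ZMod (2*d+3), Y = Set.range (fun t : Fin (d+1) => f (i + (t.1 : ℕ)))) :=
  internal_tuples_cycle_general d
end
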